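/- For every polynomial f (or more generally every function analytic on a neighborhood (−ε, ε) of 0 with everywhere-convergent manipulations), and every t with 0 < t < ε: ∫_{-∞}^{∞} (t^α / Γ(α+1)) · D^α[f(·/2)](t) dα = f(t), where D^α is the Riemann–Liouville fractional derivative of order α with base point 0, applied termwise to the power series of f. -/

import Mathlib

/-!
With the real binomial coefficient `gammaChoose k α = Γ(k+1) / (Γ(α+1) Γ(k+1-α))` one has
`t^α / Γ(α+1) · D^α t^k = gammaChoose k α · t^k`, so the identity reduces to
`∫ gammaChoose k α dα = 2^k`, a continuous analogue of `∑ j, k.choose j = 2^k`, which cancels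
the factor `2^{-k}` coming from `f(·/2)`. Pascal's rule
`gammaChoose (k+1) α = gammaChoose k α + gammaChoose k (α - 1)` reduces this, by induction on `k`
and for all shifts of `α` at once, to `k = 0`, where the reflection formula gives
`gammaChoose 0 α = sinc (π α)`. Its integral is `1` by Dirichlet's `∫₀^∞ sin x / x dx = π/2`,
which follows from `sin x / x = ∫₀^∞ e^{-xt} sin x dt` by exchanging the order of integration.
-/

open Real Filter MeasureTheory Topology

section Dirichlet

open Set

lemma integral_Ioi_exp_neg_mul {a : ℝ} (ha : 0 < a) : ∫ t in Ioi 0, exp (-a * t) = a⁻¹ := by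
  simpa using integral_exp_mul_Ioi (neg_neg_of_pos ha) 0

lemma sinc_eq_integral_exp_neg_mul {x : ℝ} (hx : 0 < x) :
    sinc x = ∫ t in Ioi 0, exp (-x * t) * sin x := by
  rw [integral_mul_const, integral_Ioi_exp_neg_mul hx, sinc_of_ne_zero hx.ne', inv_mul_eq_div]

lemma integrable_exp_neg_mul_mul_sin (T : ℝ) :
    Integrable (Function.uncurry fun x t => exp (-x * t) * sin x)
      ((volume.restrict (Ioc 0 T)).prod (volume.restrict (Ioi 0))) := by
  have hcont : Continuous (Function.uncurry fun x t : ℝ => exp (-x * t) * sin x) := by fun_prop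
  refine (integrable_prod_iff hcont.aestronglyMeasurable).2 ⟨?_, ?_⟩
  · refine (ae_restrict_iff' measurableSet_Ioc).2 (ae_of_all _ fun x hx => ?_)
    exact (integrableOn_exp_mul_Ioi (neg_neg_of_pos hx.1) 0).mul_const (sin x)
  · refine Integrable.mono' (g := fun _ => 1) (integrable_const _)
      hcont.aestronglyMeasurable.norm.integral_prod_right' ?_
    refine (ae_restrict_iff' measurableSet_Ioc).2 (ae_of_all _ fun x hx => ?_)
    have hnorm : ∫ t in Ioi 0, ‖exp (-x * t) * sin x‖ = |sinc x| := by
      simp only [norm_mul, norm_of_nonneg (exp_pos _).le, integral_mul_const,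
        integral_Ioi_exp_neg_mul hx.1, sinc_of_ne_zero hx.1.ne', abs_div, abs_of_pos hx.1,
        Real.norm_eq_abs, inv_mul_eq_div]
    simp only [Function.uncurry_apply_pair, hnorm, norm_abs_eq_norm]
    exact abs_sinc_le_one x

lemma integral_exp_neg_mul_mul_sin (t T : ℝ) :
    ∫ x in 0..T, exp (-x * t) * sin x =
      (1 - exp (-T * t) * (cos T + t * sin T)) / (1 + t ^ 2) := by
  have hderiv (x : ℝ) : HasDerivAt (fun x => -(exp (-x * t) * (cos x + t * sin x)) / (1 + t ^ 2))
      (exp (-x * t) * sin x) x := by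
    have hexp : HasDerivAt (fun x => exp (-x * t)) (exp (-x * t) * (-t)) x := by
      simpa using ((hasDerivAt_id x).neg.mul_const t).exp
    refine ((hexp.mul ((hasDerivAt_cos x).add ((hasDerivAt_sin x).const_mul t))).neg.div_const
      (1 + t ^ 2)).congr_deriv ?_
    field_simp
    simp only [Pi.add_apply]
    ring
  rw [intervalIntegral.integral_eq_sub_of_hasDerivAt (fun x _ => hderiv x)
    ((by fun_prop : Continuous fun x => exp (-x * t) * sin x).intervalIntegrable _ _)]
  simp
  ring

lemma abs_exp_mul_cos_add_mul_sin_div_le (T t : ℝ) :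
    |exp (-T * t) * (cos T + t * sin T) / (1 + t ^ 2)| ≤ exp (-T * t) := by
  have hsq : (cos T + t * sin T) ^ 2 ≤ (1 + t ^ 2) ^ 2 := by
    nlinarith [sq_nonneg (t * cos T - sin T), sin_sq_add_cos_sq T, sq_nonneg t]
  rw [abs_div, abs_mul, abs_of_pos (exp_pos _), abs_of_pos (by positivity : (0:ℝ) < 1 + t ^ 2),
    div_le_iff₀ (by positivity)]
  exact mul_le_mul_of_nonneg_left (abs_le_of_sq_le_sq hsq (by positivity)) (exp_pos _).le

lemma integrableOn_exp_mul_cos_add_mul_sin_div {T : ℝ} (hT : 0 < T) :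
    IntegrableOn (fun t => exp (-T * t) * (cos T + t * sin T) / (1 + t ^ 2)) (Ioi 0) :=
  (integrableOn_exp_mul_Ioi (neg_neg_of_pos hT) 0).mono'
    (Continuous.div (by fun_prop) (by fun_prop) fun t => by positivity).aestronglyMeasurable
    (ae_of_all _ fun t => abs_exp_mul_cos_add_mul_sin_div_le T t)

lemma tendsto_integral_exp_mul_cos_add_mul_sin_div :
    Tendsto (fun T => ∫ t in Ioi 0, exp (-T * t) * (cos T + t * sin T) / (1 + t ^ 2))
      atTop (𝓝 0) := by
  refine squeeze_zero_norm' ?_ tendsto_inv_atTop_zero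
  filter_upwards [eventually_gt_atTop 0] with T hT
  rw [← integral_Ioi_exp_neg_mul hT]
  exact norm_integral_le_of_norm_le (integrableOn_exp_mul_Ioi (neg_neg_of_pos hT) 0)
    (ae_of_all _ fun t => abs_exp_mul_cos_add_mul_sin_div_le T t)

lemma integral_sinc_eq {T : ℝ} (hT : 0 < T) :
    ∫ x in 0..T, sinc x =
      π / 2 - ∫ t in Ioi 0, exp (-T * t) * (cos T + t * sin T) / (1 + t ^ 2) := by
  have hswap : ∫ x in 0..T, sinc x =
      ∫ t in Ioi 0, (1 - exp (-T * t) * (cos T + t * sin T)) / (1 + t ^ 2) := by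
    rw [intervalIntegral.integral_of_le hT.le,
      setIntegral_congr_fun measurableSet_Ioc fun x hx => sinc_eq_integral_exp_neg_mul hx.1,
      integral_integral_swap (integrable_exp_neg_mul_mul_sin T)]
    refine setIntegral_congr_fun measurableSet_Ioi fun t _ => ?_
    rw [← intervalIntegral.integral_of_le hT.le, integral_exp_neg_mul_mul_sin]
  simp_rw [hswap, sub_div, one_div]
  rw [integral_sub integrable_inv_one_add_sq.integrableOn
    (integrableOn_exp_mul_cos_add_mul_sin_div hT), integral_Ioi_inv_one_add_sq, arctan_zero,
    sub_zero]

theorem tendsto_integral_sinc :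
    Tendsto (fun T => ∫ x in 0..T, sinc x) atTop (𝓝 (π / 2)) := by
  have h := tendsto_integral_exp_mul_cos_add_mul_sin_div.const_sub (π / 2)
  rw [sub_zero] at h
  exact h.congr' <| (eventually_gt_atTop 0).mono fun T hT => (integral_sinc_eq hT).symm

end Dirichlet

lemma tendsto_integral_sinc_pi_mul :
    Tendsto (fun T => ∫ x in 0..T, sinc (π * x)) atTop (𝓝 (1 / 2)) := by
  have h := (tendsto_integral_sinc.comp (tendsto_id.const_mul_atTop pi_pos)).const_mul π⁻¹
  rw [show π⁻¹ * (π / 2) = 1 / 2 by field_simp] at h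
  refine h.congr fun T => ?_
  simp [intervalIntegral.integral_comp_mul_left (fun x => sinc x) pi_ne_zero]

lemma tendsto_integral_comp_sub_of_even {g : ℝ → ℝ} (hg : Continuous g)
    (heven : ∀ x, g (-x) = g x) {L : ℝ} (hL : Tendsto (fun T => ∫ x in 0..T, g x) atTop (𝓝 L))
    (c : ℝ) : Tendsto (fun R => ∫ α in -R..R, g (α - c)) atTop (𝓝 (2 * L)) := by
  have hsplit (R : ℝ) :
      ∫ α in -R..R, g (α - c) = (∫ x in 0..R + c, g x) + ∫ x in 0..R - c, g x := by
    have hneg : ∫ x in -R - c..0, g x = ∫ x in 0..R + c, g x := by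
      have h := intervalIntegral.integral_comp_neg (a := 0) (b := R + c) g
      simp only [heven, neg_zero] at h
      rw [h, neg_add']
    rw [intervalIntegral.integral_comp_sub_right, ← hneg,
      intervalIntegral.integral_add_adjacent_intervals (hg.intervalIntegrable _ _)
        (hg.intervalIntegrable _ _)]
  simp_rw [hsplit, two_mul]
  exact (hL.comp (tendsto_atTop_add_const_right _ c tendsto_id)).add
    (hL.comp (tendsto_atTop_add_const_right _ (-c) tendsto_id))

-- Valid at the poles too: Mathlib's `Gamma` vanishes on `-ℕ`, so `(Gamma x)⁻¹` is the entire `1/Γ`.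
lemma inv_Gamma_eq_mul_inv_Gamma_add_one (x : ℝ) : (Gamma x)⁻¹ = x * (Gamma (x + 1))⁻¹ := by
  rcases eq_or_ne x 0 with rfl | hx
  · simp [Gamma_zero]
  · rw [Gamma_add_one hx, mul_inv, mul_inv_cancel_left₀ hx]

noncomputable def gammaChoose (k : ℕ) (α : ℝ) : ℝ :=
  Gamma (k + 1) / (Gamma (α + 1) * Gamma (k + 1 - α))

lemma gammaChoose_zero_left (α : ℝ) : gammaChoose 0 α = sinc (π * α) := by
  rcases eq_or_ne α 0 with rfl | hα
  · simp [gammaChoose, Gamma_one]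
  rw [gammaChoose, Nat.cast_zero, zero_add, Gamma_one, Gamma_add_one hα, mul_assoc,
    Gamma_mul_Gamma_one_sub, sinc_of_ne_zero (mul_ne_zero pi_ne_zero hα), one_div, mul_inv, inv_div]
  ring

lemma gammaChoose_succ (k : ℕ) (α : ℝ) :
    gammaChoose (k + 1) α = gammaChoose k α + gammaChoose k (α - 1) := by
  have h1 := inv_Gamma_eq_mul_inv_Gamma_add_one α
  have h2 := inv_Gamma_eq_mul_inv_Gamma_add_one ((k : ℝ) + 1 - α)
  have h3 : Gamma ((k : ℝ) + 1 + 1) = (k + 1) * Gamma (k + 1) := Gamma_add_one (by positivity)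
  simp only [gammaChoose, div_eq_mul_inv, mul_inv, Nat.cast_add, Nat.cast_one, sub_add_cancel,
    h1, h2, h3, show (k : ℝ) + 1 - (α - 1) = k + 1 + 1 - α by ring,
    show (k : ℝ) + 1 - α + 1 = k + 1 + 1 - α by ring]
  ring

lemma continuous_gammaChoose (k : ℕ) : Continuous (gammaChoose k) := by
  induction k with
  | zero => simpa only [funext gammaChoose_zero_left] using by fun_prop
  | succ k ih =>
    rw [funext (gammaChoose_succ k)]
    exact ih.add (ih.comp (continuous_sub_right 1))

lemma tendsto_integral_gammaChoose_comp_sub (k : ℕ) (c : ℝ) :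
    Tendsto (fun R => ∫ α in -R..R, gammaChoose k (α - c)) atTop (𝓝 (2 ^ k)) := by
  induction k generalizing c with
  | zero =>
    simpa [gammaChoose_zero_left] using tendsto_integral_comp_sub_of_even
      (g := fun x => sinc (π * x)) (by fun_prop) (fun x => by rw [mul_neg, sinc_neg])
      tendsto_integral_sinc_pi_mul c
  | succ k ih =>
    have hsplit (R : ℝ) : ∫ α in -R..R, gammaChoose (k + 1) (α - c) =
        (∫ α in -R..R, gammaChoose k (α - c)) + ∫ α in -R..R, gammaChoose k (α - (c + 1)) := by
      simp_rw [gammaChoose_succ, sub_sub]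
      exact intervalIntegral.integral_add
        (((continuous_gammaChoose k).comp (continuous_sub_right c)).intervalIntegrable _ _)
        (((continuous_gammaChoose k).comp (continuous_sub_right (c + 1))).intervalIntegrable _ _)
    simp_rw [hsplit, pow_succ, mul_two]
    exact (ih c).add (ih (c + 1))

open Finset Polynomial

lemma rpow_div_Gamma_mul_Gamma_div_mul_rpow {t : ℝ} (ht : 0 < t) (k : ℕ) (α : ℝ) :
    t ^ α / Gamma (α + 1) * (Gamma ((k : ℝ) + 1) / Gamma ((k : ℝ) + 1 - α) * t ^ ((k : ℝ) - α)) =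
      t ^ k * gammaChoose k α := by
  have hsplit : t ^ k = t ^ α * t ^ ((k : ℝ) - α) := by
    rw [← rpow_add ht, add_sub_cancel, rpow_natCast]
  rw [hsplit, gammaChoose]
  ring

theorem main_identity_polynomial (f : Polynomial ℝ) (t : ℝ) (ht : 0 < t) :
    Tendsto (fun R : ℝ => ∫ α in (-R)..R,
        (t ^ α / Real.Gamma (α + 1)) *
          ∑ k ∈ Finset.range (f.natDegree + 1),
            f.coeff k * (1 / 2 ^ k) *
              (Real.Gamma ((k : ℝ) + 1) / Real.Gamma ((k : ℝ) + 1 - α)) * t ^ ((k : ℝ) - α))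
      atTop (nhds (f.eval t)) := by
  have hterm (α : ℝ) (k : ℕ) : t ^ α / Gamma (α + 1) * (f.coeff k * (1 / 2 ^ k) *
      (Gamma ((k : ℝ) + 1) / Gamma ((k : ℝ) + 1 - α)) * t ^ ((k : ℝ) - α)) =
      f.coeff k / 2 ^ k * t ^ k * gammaChoose k α := by
    linear_combination f.coeff k / 2 ^ k * rpow_div_Gamma_mul_Gamma_div_mul_rpow ht k α
  have hlim : Tendsto (fun R => ∑ k ∈ range (f.natDegree + 1),
      f.coeff k / 2 ^ k * t ^ k * ∫ α in -R..R, gammaChoose k α) atTop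
      (𝓝 (∑ k ∈ range (f.natDegree + 1), f.coeff k / 2 ^ k * t ^ k * 2 ^ k)) :=
    tendsto_finsetSum _ fun k _ => by
      simpa using (tendsto_integral_gammaChoose_comp_sub k 0).const_mul (f.coeff k / 2 ^ k * t ^ k)
  rw [eval_eq_sum_range]
  convert hlim using 2 with R
  · simp_rw [Finset.mul_sum, hterm]
    rw [intervalIntegral.integral_finsetSum fun k _ =>
      ((continuous_gammaChoose k).intervalIntegrable _ _).const_mul _]
    simp_rw [intervalIntegral.integral_const_mul]
  · refine sum_congr rfl fun k _ => ?_
    field_simp
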